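/- arXiv:1805.00335 — 4 statements merged into one kernel-verified Lean document; each statement's English description precedes it below -/
import Mathlib

section
/- Let μ be a finite positive Borel measure on [0,∞), let z_1,…,z_M be distinct points of the open upper half-plane ℂ⁺ = {z ∈ ℂ : Im z > 0}, and let u_1,…,u_M, v_1,…,v_M ∈ ℂ satisfy (∫_{[0,∞)} (t − z_i)⁻¹ dμ(t))·u_i = v_i for each i. Then the M×M matrix S₁ with entries (S₁)_{ij} = (conj(u_i)·v_j − conj(v_i)·u_j)/(z_j − conj(z_i)) is Hermitian positive semidefinite. -/
open MeasureTheory Matrix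
open scoped ComplexOrder
open ComplexConjugate

/-!
By the resolvent identity
`(b - conj a) (t - conj a)⁻¹ (t - b)⁻¹ = (t - b)⁻¹ - (t - conj a)⁻¹`, the `(i, j)` entry of `S₁` is
`∫ conj (u i (t - z i)⁻¹) · u j (t - z j)⁻¹ dμ(t)`, so `S₁` is the Gram matrix of the functions
`t ↦ u i (t - z i)⁻¹` in `L²(μ)`, which are bounded since `Im z i ≠ 0`.
-/

namespace Complex

theorem ofReal_sub_ne_zero_of_im_ne_zero {z : ℂ} (hz : z.im ≠ 0) (t : ℝ) : (t : ℂ) - z ≠ 0 :=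
  fun h => hz (by simpa using congrArg im h)

theorem norm_inv_ofReal_sub_le {z : ℂ} (hz : z.im ≠ 0) (t : ℝ) :
    ‖((t : ℂ) - z)⁻¹‖ ≤ |z.im|⁻¹ := by
  rw [norm_inv]
  refine inv_anti₀ (abs_pos.mpr hz) ?_
  simpa using abs_im_le_norm ((t : ℂ) - z)

end Complex

theorem memLp_inv_ofReal_sub (μ : Measure ℝ) [IsFiniteMeasure μ] (p : ENNReal) {z : ℂ}
    (hz : z.im ≠ 0) : MemLp (fun t : ℝ => ((t : ℂ) - z)⁻¹) p μ :=
  .of_bound (by fun_prop : Measurable fun t : ℝ => ((t : ℂ) - z)⁻¹).aestronglyMeasurable _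
    (ae_of_all _ (Complex.norm_inv_ofReal_sub_le hz))

theorem Matrix.posSemidef_integral_conj_mul {α 𝕜 ι : Type*} [RCLike 𝕜] [Finite ι]
    [MeasurableSpace α] {μ : Measure α} {g : ι → α → 𝕜} (hg : ∀ i, MemLp (g i) 2 μ) :
    (Matrix.of fun i j => ∫ x, conj (g i x) * g j x ∂μ).PosSemidef := by
  convert posSemidef_gram 𝕜 fun i => (hg i).toLp using 1
  ext i j
  rw [gram_apply, L2.inner_def, of_apply]
  refine integral_congr_ae ?_
  filter_upwards [(hg _).coeFn_toLp, (hg _).coeFn_toLp] with x hi hj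
  rw [hi, hj, RCLike.inner_apply']

theorem mul_integral_conj_inv_sub_mul_inv_sub (μ : Measure ℝ) [IsFiniteMeasure μ] {a b : ℂ}
    (ha : a.im ≠ 0) (hb : b.im ≠ 0) :
    (b - conj a) * ∫ t : ℝ, conj ((t : ℂ) - a)⁻¹ * ((t : ℂ) - b)⁻¹ ∂μ
      = (∫ t : ℝ, ((t : ℂ) - b)⁻¹ ∂μ) - conj (∫ t : ℝ, ((t : ℂ) - a)⁻¹ ∂μ) := by
  have ha' : (conj a).im ≠ 0 := by simpa using ha
  simp_rw [← integral_conj, map_inv₀, map_sub, Complex.conj_ofReal]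
  rw [← integral_const_mul, ← integral_sub ((memLp_inv_ofReal_sub μ 1 hb).integrable le_rfl)
    ((memLp_inv_ofReal_sub μ 1 ha').integrable le_rfl)]
  congr with t
  have hta := Complex.ofReal_sub_ne_zero_of_im_ne_zero ha' t
  have htb := Complex.ofReal_sub_ne_zero_of_im_ne_zero hb t
  field_simp
  ring

theorem stmt0_general (M : ℕ) (μ : Measure ℝ) [IsFiniteMeasure μ]
    (z : Fin M → ℂ) (him : ∀ i, 0 < (z i).im)
    (u v : Fin M → ℂ)
    (huv : ∀ i, (∫ t : ℝ, ((t : ℂ) - z i)⁻¹ ∂μ) * u i = v i) :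
    (Matrix.of fun i j : Fin M =>
      ((starRingEnd ℂ) (u i) * v j - (starRingEnd ℂ) (v i) * u j) /
        (z j - (starRingEnd ℂ) (z i))).PosSemidef := by
  have hg (i) : MemLp (fun t : ℝ => u i * ((t : ℂ) - z i)⁻¹) 2 μ :=
    (memLp_inv_ofReal_sub μ 2 (him i).ne').const_mul (u i)
  suffices hS : (Matrix.of fun i j : Fin M =>
      (conj (u i) * v j - conj (v i) * u j) / (z j - conj (z i))) =
      Matrix.of fun i j =>
        ∫ t : ℝ, conj (u i * ((t : ℂ) - z i)⁻¹) * (u j * ((t : ℂ) - z j)⁻¹) ∂μ by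
    rw [hS]
    exact posSemidef_integral_conj_mul hg
  ext i j
  rw [of_apply, of_apply]
  have hne : z j - conj (z i) ≠ 0 := sub_ne_zero.mpr fun h => by
    have := congrArg Complex.im h
    simp only [Complex.conj_im] at this
    linarith [him i, him j]
  calc _ = conj (u i) * u j * ((z j - conj (z i)) *
        ∫ t : ℝ, conj ((t : ℂ) - z i)⁻¹ * ((t : ℂ) - z j)⁻¹ ∂μ) / (z j - conj (z i)) := by
        rw [mul_integral_conj_inv_sub_mul_inv_sub μ (him i).ne' (him j).ne', ← huv i, ← huv j,
          map_mul]
        ring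
    _ = _ := by
        rw [mul_div_assoc, mul_div_cancel_left₀ _ hne, ← integral_const_mul]
        congr with t
        rw [map_mul]
        ring

/-- For a finite positive Borel measure μ on [0,∞), distinct points
z₁,…,z_M in the open upper half-plane, and u_i, v_i ∈ ℂ with F(z_i)·u_i = v_i where
F is the Cauchy–Stieltjes transform of μ, the matrix S₁ with entries
(conj(u_i)·v_j − conj(v_i)·u_j)/(z_j − conj(z_i)) is Hermitian positive semidefinite. -/
theorem stmt0 (M : ℕ) (μ : Measure ℝ) [IsFiniteMeasure μ]
    (hμ : μ (Set.Iio 0) = 0)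
    (z : Fin M → ℂ) (hz : Function.Injective z) (him : ∀ i, 0 < (z i).im)
    (u v : Fin M → ℂ)
    (huv : ∀ i, (∫ t : ℝ, ((t : ℂ) - z i)⁻¹ ∂μ) * u i = v i) :
    (Matrix.of fun i j : Fin M =>
      ((starRingEnd ℂ) (u i) * v j - (starRingEnd ℂ) (v i) * u j) /
        (z j - (starRingEnd ℂ) (z i))).PosSemidef :=
  stmt0_general M μ z him u v huv
end

section
/- Let d_1,…,d_N be nonnegative real numbers, let A_1,…,A_N be Hermitian positive semidefinite p×p complex matrices, and define F(z) = Σ_{k=1}^N (d_k − z)⁻¹ A_k for z ∉ [0,∞). Let z_1,…,z_M be distinct points of the open upper half-plane, and let u_1,…,u_M, v_1,…,v_M be p×q complex matrices with F(z_i)·u_i = v_i for each i. Then the qM×qM block matrix S₁ whose (i,j) block of size q×q is (u_i* v_j − v_i* u_j)/(z_j − conj(z_i)) is Hermitian positive semidefinite. -/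
/-!
Every term of `F` is a scalar resolvent, and the resolvent identity
`(d - z)⁻¹ - (d - w̄)⁻¹ = (z - w̄) (d - w̄)⁻¹ (d - z)⁻¹` (for real `d`) gives
`u_iᴴ v_j - v_iᴴ u_j = (z_j - z̄_i) Σ_k ((d_k - z_i)⁻¹ u_i)ᴴ A_k ((d_k - z_j)⁻¹ u_j)`.
Dividing by `z_j - z̄_i`, which does not vanish on the upper half-plane, exhibits `S₁` as
`Σ_k E_kᴴ A_k E_k` with `E_k` the block row `[(d_k - z_j)⁻¹ u_j]_j`, a sum of positive
semidefinite matrices.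
-/

open Matrix
open scoped ComplexOrder

namespace Matrix

variable {κ ι m n R : Type*} [Fintype m]

def blockRow (X : ι → Matrix m n R) : Matrix m (ι × n) R :=
  of fun r jb => X jb.1 r jb.2

lemma conjTranspose_blockRow_mul_mul_blockRow [NonUnitalSemiring R] [StarRing R]
    (X Y : ι → Matrix m n R) (B : Matrix m m R) :
    (blockRow X)ᴴ * B * blockRow Y = of fun ia jb => ((X ia.1)ᴴ * B * Y jb.1) ia.2 jb.2 := by
  ext ia jb
  simp [blockRow, mul_apply]

lemma posSemidef_of_sum_conjTranspose_mul_mul [Fintype κ] [Fintype ι] [Fintype n]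
    [Ring R] [PartialOrder R] [StarRing R] [StarOrderedRing R]
    {A : κ → Matrix m m R} (hA : ∀ k, (A k).PosSemidef) (X : κ → ι → Matrix m n R) :
    (of fun ia jb : ι × n => (∑ k, (X k ia.1)ᴴ * A k * X k jb.1) ia.2 jb.2).PosSemidef := by
  have hsum : (of fun ia jb : ι × n => (∑ k, (X k ia.1)ᴴ * A k * X k jb.1) ia.2 jb.2) =
      ∑ k, (blockRow (X k))ᴴ * A k * blockRow (X k) := by
    ext ia jb
    simp [conjTranspose_blockRow_mul_mul_blockRow, sum_apply]
  rw [hsum]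
  exact posSemidef_sum _ fun k _ => (hA k).conjTranspose_mul_mul_same _

end Matrix

lemma ofReal_sub_ne_zero_of_im_ne_zero {d : ℝ} {z : ℂ} (hz : z.im ≠ 0) : (d : ℂ) - z ≠ 0 := by
  intro h
  apply hz
  simpa using congrArg Complex.im h

lemma inv_ofReal_sub_sub_inv_ofReal_sub {d : ℝ} {w z : ℂ} (hw : w.im ≠ 0) (hz : z.im ≠ 0) :
    ((d : ℂ) - z)⁻¹ - ((d : ℂ) - starRingEnd ℂ w)⁻¹ =
      (z - starRingEnd ℂ w) * (starRingEnd ℂ ((d : ℂ) - w)⁻¹ * ((d : ℂ) - z)⁻¹) := by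
  have hw' : (d : ℂ) - starRingEnd ℂ w ≠ 0 :=
    ofReal_sub_ne_zero_of_im_ne_zero (by simpa using hw)
  rw [inv_sub_inv' (ofReal_sub_ne_zero_of_im_ne_zero hz) hw']
  simp only [map_inv₀, map_sub, Complex.conj_ofReal]
  ring

section AtomicStieltjes

variable {κ m n : Type*} [Fintype κ] (d : κ → ℝ) {A : κ → Matrix m m ℂ}

noncomputable def atomicStieltjes (A : κ → Matrix m m ℂ) (z : ℂ) : Matrix m m ℂ :=
  ∑ k, ((d k : ℂ) - z)⁻¹ • A k

lemma conjTranspose_atomicStieltjes (hA : ∀ k, (A k).IsHermitian) (z : ℂ) :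
    (atomicStieltjes d A z)ᴴ = atomicStieltjes d A (starRingEnd ℂ z) := by
  simp [atomicStieltjes, conjTranspose_sum, (hA _).eq]

lemma conjTranspose_mul_atomicStieltjes_mul_sub [Fintype m] (hA : ∀ k, (A k).IsHermitian)
    {w z : ℂ} (hw : w.im ≠ 0) (hz : z.im ≠ 0) (x y : Matrix m n ℂ) :
    xᴴ * (atomicStieltjes d A z * y) - (atomicStieltjes d A w * x)ᴴ * y =
      (z - starRingEnd ℂ w) •
        ∑ k, (((d k : ℂ) - w)⁻¹ • x)ᴴ * A k * (((d k : ℂ) - z)⁻¹ • y) := by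
  rw [conjTranspose_mul, conjTranspose_atomicStieltjes d hA, Matrix.mul_assoc, ← Matrix.mul_sub,
    ← Matrix.sub_mul, atomicStieltjes, atomicStieltjes, ← Finset.sum_sub_distrib,
    Matrix.sum_mul, Matrix.mul_sum, Finset.smul_sum]
  refine Finset.sum_congr rfl fun k _ => ?_
  rw [← sub_smul, inv_ofReal_sub_sub_inv_ofReal_sub hw hz, conjTranspose_smul, Complex.star_def]
  simp only [Matrix.smul_mul, Matrix.mul_smul, smul_smul, Matrix.mul_assoc]
  ring_nf

end AtomicStieltjes

theorem stmt3_general (N p q M : ℕ) (d : Fin N → ℝ)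
    (A : Fin N → Matrix (Fin p) (Fin p) ℂ) (hA : ∀ k, (A k).PosSemidef)
    (z : Fin M → ℂ) (him : ∀ i, 0 < (z i).im)
    (u v : Fin M → Matrix (Fin p) (Fin q) ℂ)
    (huv : ∀ i, (∑ k, ((d k : ℂ) - z i)⁻¹ • A k) * u i = v i) :
    (Matrix.of fun ia jb : Fin M × Fin q =>
      (((u ia.1)ᴴ * v jb.1 - (v ia.1)ᴴ * u jb.1) ia.2 jb.2) /
        (z jb.1 - (starRingEnd ℂ) (z ia.1))).PosSemidef := by
  have hne : ∀ i j, z j - starRingEnd ℂ (z i) ≠ 0 := fun i j h => by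
    have := congrArg Complex.im h
    simp only [Complex.sub_im, Complex.conj_im, Complex.zero_im] at this
    linarith [him i, him j]
  convert posSemidef_of_sum_conjTranspose_mul_mul hA
    (fun k j => ((d k : ℂ) - z j)⁻¹ • u j) using 2
  funext ia jb
  have hF : ∀ i, atomicStieltjes d A (z i) * u i = v i := huv
  rw [← hF ia.1, ← hF jb.1,
    conjTranspose_mul_atomicStieltjes_mul_sub d (fun k => (hA k).isHermitian)
      (him ia.1).ne' (him jb.1).ne',
    Matrix.smul_apply, smul_eq_mul, mul_div_cancel_left₀ _ (hne ia.1 jb.1)]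

/-- matrix-valued version of Statement 0, with F(z) = Σ (d_k − z)⁻¹ A_k
an atomic matrix Stieltjes function; the qM×qM block matrix S₁ is positive semidefinite. -/
theorem stmt3 (N p q M : ℕ) (d : Fin N → ℝ) (hd : ∀ k, 0 ≤ d k)
    (A : Fin N → Matrix (Fin p) (Fin p) ℂ) (hA : ∀ k, (A k).PosSemidef)
    (z : Fin M → ℂ) (hz : Function.Injective z) (him : ∀ i, 0 < (z i).im)
    (u v : Fin M → Matrix (Fin p) (Fin q) ℂ)
    (huv : ∀ i, (∑ k, ((d k : ℂ) - z i)⁻¹ • A k) * u i = v i) :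
    (Matrix.of fun ia jb : Fin M × Fin q =>
      (((u ia.1)ᴴ * v jb.1 - (v ia.1)ᴴ * u jb.1) ia.2 jb.2) /
        (z jb.1 - (starRingEnd ℂ) (z ia.1))).PosSemidef :=
  stmt3_general N p q M d A hA z him u v huv
end

section
/- Let d_1,…,d_N be nonnegative real numbers, let A_1,…,A_N be Hermitian positive semidefinite p×p complex matrices, and define F(z) = Σ_{k=1}^N (d_k − z)⁻¹ A_k for z ∉ [0,∞). Let z_1,…,z_M be distinct points of the open upper half-plane, and let u_1,…,u_M, v_1,…,v_M be p×q complex matrices with F(z_i)·u_i = v_i for each i. Then the qM×qM block matrix S₂ whose (i,j) block of size q×q is (z_j·u_i* v_j − conj(z_i)·v_i* u_j)/(z_j − conj(z_i)) is Hermitian positive semidefinite. -/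
open Matrix
open scoped ComplexOrder

/-
Since `F(z) = Σ_k (d_k - z)⁻¹ A_k` and the `A_k` are Hermitian, `u_i* v_j` and `v_i* u_j` are
combinations of the blocks `u_i* A_k u_j`, and the resolvent identity
`(z/(d - z) - w̄/(d - w̄)) / (z - w̄) = d / ((d - w̄)(d - z))` turns `S₂` into
`Σ_k d_k · X_k* A_k X_k`, where `X_k` is the `p × qM` matrix with blocks `(d_k - z_j)⁻¹ u_j`.
Each summand is positive semidefinite because `d_k ≥ 0` and `A_k ≥ 0`.
-/

theorem Matrix.posSemidef_of_conjTranspose_mul_mul_blocks {ι m n R : Type*} [Fintype m]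
    [Finite ι] [Finite n] [CommRing R] [PartialOrder R] [StarRing R]
    {A : Matrix m m R} (hA : A.PosSemidef) (u : ι → Matrix m n R) :
    (of fun ia jb : ι × n => ((u ia.1)ᴴ * A * u jb.1) ia.2 jb.2).PosSemidef := by
  convert hA.conjTranspose_mul_mul_same (of fun (a : m) (jb : ι × n) => u jb.1 a jb.2) using 1
  ext ⟨i, a⟩ ⟨j, b⟩
  simp [mul_apply, conjTranspose_apply]

theorem Complex.ofReal_sub_ne_zero_of_im_pos {z : ℂ} (hz : 0 < z.im) (x : ℝ) :
    (x : ℂ) - z ≠ 0 :=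
  fun h => by simpa [hz.ne'] using congrArg Complex.im h

theorem Complex.ofReal_sub_conj_ne_zero_of_im_pos {z : ℂ} (hz : 0 < z.im) (x : ℝ) :
    (x : ℂ) - starRingEnd ℂ z ≠ 0 :=
  fun h => by simpa [hz.ne'] using congrArg Complex.im h

theorem Complex.sub_conj_ne_zero_of_im_pos {z w : ℂ} (hz : 0 < z.im) (hw : 0 < w.im) :
    z - starRingEnd ℂ w ≠ 0 :=
  fun h => by simpa [(add_pos hz hw).ne'] using congrArg Complex.im h

theorem mul_inv_sub_difference_quotient {K : Type*} [Field K] {c z w : K} (hz : c - z ≠ 0)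
    (hw : c - w ≠ 0) (hzw : z - w ≠ 0) :
    (z * (c - z)⁻¹ - w * (c - w)⁻¹) / (z - w) = c * ((c - w)⁻¹ * (c - z)⁻¹) := by
  field_simp
  ring

section ResolventSum

variable {κ m n : Type*} [Fintype κ] [Fintype m] (d : κ → ℝ)

theorem conjTranspose_mul_resolventSum_mul (A : κ → Matrix m m ℂ) (z : ℂ)
    (u u' : Matrix m n ℂ) :
    uᴴ * ((∑ k, ((d k : ℂ) - z)⁻¹ • A k) * u') =
      ∑ k, ((d k : ℂ) - z)⁻¹ • (uᴴ * A k * u') := by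
  simp [Matrix.sum_mul, Matrix.mul_sum, Matrix.mul_assoc]

theorem resolventSum_mul_conjTranspose_mul {A : κ → Matrix m m ℂ} (hA : ∀ k, (A k).IsHermitian) (w : ℂ)
    (u u' : Matrix m n ℂ) :
    ((∑ k, ((d k : ℂ) - w)⁻¹ • A k) * u)ᴴ * u' =
      ∑ k, ((d k : ℂ) - starRingEnd ℂ w)⁻¹ • (uᴴ * A k * u') := by
  simp [conjTranspose_mul, conjTranspose_sum, (hA _).eq, Matrix.sum_mul, Matrix.mul_assoc]

theorem smul_conjTranspose_mul_resolventSum_mul_sub {A : κ → Matrix m m ℂ}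
    (hA : ∀ k, (A k).IsHermitian) {z w : ℂ}
    (hz : ∀ k, (d k : ℂ) - z ≠ 0) (hw : ∀ k, (d k : ℂ) - starRingEnd ℂ w ≠ 0)
    (hzw : z - starRingEnd ℂ w ≠ 0) (u u' : Matrix m n ℂ) :
    z • (uᴴ * ((∑ k, ((d k : ℂ) - z)⁻¹ • A k) * u')) -
        starRingEnd ℂ w • (((∑ k, ((d k : ℂ) - w)⁻¹ • A k) * u)ᴴ * u') =
      (z - starRingEnd ℂ w) • ∑ k, ((d k : ℂ) * (((d k : ℂ) - starRingEnd ℂ w)⁻¹ *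
        ((d k : ℂ) - z)⁻¹)) • (uᴴ * A k * u') := by
  rw [conjTranspose_mul_resolventSum_mul, resolventSum_mul_conjTranspose_mul d hA,
    Finset.smul_sum, Finset.smul_sum, Finset.smul_sum, ← Finset.sum_sub_distrib]
  refine Finset.sum_congr rfl fun k _ => ?_
  rw [smul_smul, smul_smul, smul_smul, ← sub_smul,
    ← mul_inv_sub_difference_quotient (hz k) (hw k) hzw, mul_div_cancel₀ _ hzw]

end ResolventSum

theorem stmt4_general (N p q M : ℕ) (d : Fin N → ℝ) (hd : ∀ k, 0 ≤ d k)
    (A : Fin N → Matrix (Fin p) (Fin p) ℂ) (hA : ∀ k, (A k).PosSemidef)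
    (z : Fin M → ℂ) (him : ∀ i, 0 < (z i).im)
    (u v : Fin M → Matrix (Fin p) (Fin q) ℂ)
    (huv : ∀ i, (∑ k, ((d k : ℂ) - z i)⁻¹ • A k) * u i = v i) :
    (Matrix.of fun ia jb : Fin M × Fin q =>
      ((z jb.1 • ((u ia.1)ᴴ * v jb.1) - (starRingEnd ℂ) (z ia.1) • ((v ia.1)ᴴ * u jb.1))
          ia.2 jb.2) /
        (z jb.1 - (starRingEnd ℂ) (z ia.1))).PosSemidef := by
  have hden : ∀ i j, z j - starRingEnd ℂ (z i) ≠ 0 := fun i j =>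
    Complex.sub_conj_ne_zero_of_im_pos (him j) (him i)
  have hsummand : ∀ k ∈ (Finset.univ : Finset (Fin N)), (of fun ia jb : Fin M × Fin q =>
      ((((d k : ℂ) - z ia.1)⁻¹ • u ia.1)ᴴ * ((d k : ℂ) • A k) *
        (((d k : ℂ) - z jb.1)⁻¹ • u jb.1)) ia.2 jb.2).PosSemidef := fun k _ =>
    posSemidef_of_conjTranspose_mul_mul_blocks
      ((hA k).smul (a := (d k : ℂ)) (by exact_mod_cast hd k))
      fun i => ((d k : ℂ) - z i)⁻¹ • u i
  refine (congrArg PosSemidef ?_).mpr (posSemidef_sum _ hsummand)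
  ext ⟨i, a⟩ ⟨j, b⟩
  rw [of_apply, ← huv i, ← huv j,
    smul_conjTranspose_mul_resolventSum_mul_sub d (fun k => (hA k).1)
      (fun k => Complex.ofReal_sub_ne_zero_of_im_pos (him j) _)
      (fun k => Complex.ofReal_sub_conj_ne_zero_of_im_pos (him i) _) (hden i j),
    Matrix.smul_apply, smul_eq_mul, mul_div_cancel_left₀ _ (hden i j)]
  simp only [Matrix.sum_apply, of_apply, conjTranspose_smul, Matrix.smul_mul, Matrix.mul_smul,
    Matrix.smul_apply, smul_eq_mul, star_inv₀, star_sub, Complex.star_def, Complex.conj_ofReal]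
  refine Finset.sum_congr rfl fun k _ => ?_
  ring

/-- matrix-valued version of Statement 1: the qM×qM block matrix S₂ whose
(i,j) block is (z_j·u_i* v_j − conj(z_i)·v_i* u_j)/(z_j − conj(z_i)) is positive
semidefinite. -/
theorem stmt4 (N p q M : ℕ) (d : Fin N → ℝ) (hd : ∀ k, 0 ≤ d k)
    (A : Fin N → Matrix (Fin p) (Fin p) ℂ) (hA : ∀ k, (A k).PosSemidef)
    (z : Fin M → ℂ) (hz : Function.Injective z) (him : ∀ i, 0 < (z i).im)
    (u v : Fin M → Matrix (Fin p) (Fin q) ℂ)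
    (huv : ∀ i, (∑ k, ((d k : ℂ) - z i)⁻¹ • A k) * u i = v i) :
    (Matrix.of fun ia jb : Fin M × Fin q =>
      ((z jb.1 • ((u ia.1)ᴴ * v jb.1) - (starRingEnd ℂ) (z ia.1) • ((v ia.1)ᴴ * u jb.1))
          ia.2 jb.2) /
        (z jb.1 - (starRingEnd ℂ) (z ia.1))).PosSemidef :=
  stmt4_general N p q M d hd A hA z him u v huv
end

section
/- Let z_1,…,z_M be distinct points of the open upper half-plane, let u_1,…,u_M, v_1,…,v_M be p×q complex matrices, and define the qM×qM block matrices S₁ and S₂ whose (i,j) blocks of size q×q are (u_i* v_j − v_i* u_j)/(z_j − conj(z_i)) and (z_j·u_i* v_j − conj(z_i)·v_i* u_j)/(z_j − conj(z_i)) respectively, and the p×qM matrix C₊ = (v_1 ⋯ v_M). Assume S₁ is Hermitian positive definite and S₂ is Hermitian positive semidefinite. Then for each i = 1,…,M, the matrix S₂ − z_i S₁ is invertible and C₊ (S₂ − z_i S₁)⁻¹ C₊* u_i = v_i. -/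
/-!
If `(S₂ - z S₁) x = 0`, then `x* S₂ x - z · x* S₁ x = 0`; both quadratic forms are real and
`x* S₁ x > 0` when `x ≠ 0`, so taking imaginary parts forces `x = 0` whenever `Im z ≠ 0`.
For the identity, the denominators cancel in the `k`-th block column of `S₂ - z_k S₁`, which is
exactly `C₊* u_k`; since the `k`-th block column of `C₊` is `v_k`, the block unit column `E_k`
satisfies `(S₂ - z_k S₁) E_k = C₊* u_k` and `C₊ E_k = v_k`.
-/

open Matrix
open scoped ComplexOrder

theorem Matrix.isUnit_sub_smul_of_posDef {𝕜 n : Type*} [RCLike 𝕜] [Fintype n] [DecidableEq n]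
    {S₁ S₂ : Matrix n n 𝕜} (h₁ : S₁.PosDef) (h₂ : S₂.IsHermitian) {w : 𝕜}
    (hw : RCLike.im w ≠ 0) : IsUnit (S₂ - w • S₁) := by
  rw [isUnit_iff_isUnit_det, isUnit_iff_ne_zero, Ne, ← exists_mulVec_eq_zero_iff]
  rintro ⟨x, hx, hAx⟩
  have hquad : star x ⬝ᵥ S₂ *ᵥ x - w * (star x ⬝ᵥ S₁ *ᵥ x) = 0 := by
    simpa [sub_mulVec, smul_mulVec, dotProduct_sub, dotProduct_smul] using
      congrArg (star x ⬝ᵥ ·) hAx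
  have him := congrArg RCLike.im hquad
  rw [map_sub, RCLike.mul_im, h₂.im_star_dotProduct_mulVec_self,
    h₁.isHermitian.im_star_dotProduct_mulVec_self, map_zero] at him
  have hpos := h₁.re_dotProduct_pos hx
  have : RCLike.im w * RCLike.re (star x ⬝ᵥ S₁ *ᵥ x) = 0 := by linarith
  exact hw ((mul_eq_zero.mp this).resolve_right hpos.ne')

theorem div_sub_mul_div_sub_eq {K : Type*} [Field K] {ζ ω : K} (h : ζ ≠ ω) (a b : K) :
    (ζ * a - ω * b) / (ζ - ω) - ζ * ((a - b) / (ζ - ω)) = b := by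
  field_simp [sub_ne_zero.mpr h]
  ring

theorem Complex.sub_conj_ne_zero {z w : ℂ} (hz : 0 < z.im) (hw : 0 < w.im) :
    z - (starRingEnd ℂ) w ≠ 0 := by
  intro h
  have := congrArg Complex.im h
  simp only [Complex.sub_im, Complex.conj_im, sub_neg_eq_add, Complex.zero_im] at this
  linarith

theorem stmt11_general (p q M : ℕ) (z : Fin M → ℂ)
    (him : ∀ i, 0 < (z i).im)
    (u v : Fin M → Matrix (Fin p) (Fin q) ℂ)
    (S₁ S₂ : Matrix (Fin M × Fin q) (Fin M × Fin q) ℂ)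
    (hS₁ : S₁ = Matrix.of fun ia jb =>
      (((u ia.1)ᴴ * v jb.1 - (v ia.1)ᴴ * u jb.1) ia.2 jb.2) /
        (z jb.1 - (starRingEnd ℂ) (z ia.1)))
    (hS₂ : S₂ = Matrix.of fun ia jb =>
      ((z jb.1 • ((u ia.1)ᴴ * v jb.1) - (starRingEnd ℂ) (z ia.1) • ((v ia.1)ᴴ * u jb.1))
          ia.2 jb.2) /
        (z jb.1 - (starRingEnd ℂ) (z ia.1)))
    (Cp : Matrix (Fin p) (Fin M × Fin q) ℂ)
    (hCp : Cp = Matrix.of fun a jb => v jb.1 a jb.2)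
    (hpd : S₁.PosDef) (hpsd : S₂.PosSemidef) :
    ∀ i, IsUnit (S₂ - z i • S₁) ∧
      Cp * (S₂ - z i • S₁)⁻¹ * (Cpᴴ * u i) = v i := by
  intro k
  have hunit : IsUnit (S₂ - z k • S₁) :=
    isUnit_sub_smul_of_posDef hpd hpsd.isHermitian (him k).ne'
  refine ⟨hunit, ?_⟩
  set E : Matrix (Fin M × Fin q) (Fin q) ℂ := (1 : Matrix _ _ ℂ).submatrix id (Prod.mk k)
  have hE : ∀ {m : Type} (X : Matrix m (Fin M × Fin q) ℂ), X * E = X.submatrix id (Prod.mk k) :=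
    fun X => mul_submatrix_one (Equiv.refl _) _ X
  have hAE : (S₂ - z k • S₁) * E = Cpᴴ * u k := by
    ext ⟨i, a⟩ c
    rw [hE]
    subst hS₁ hS₂ hCp
    simpa [mul_apply, sub_div, mul_sub] using
      div_sub_mul_div_sub_eq (sub_ne_zero.mp (Complex.sub_conj_ne_zero (him k) (him i)))
        (((u i)ᴴ * v k) a c) (((v i)ᴴ * u k) a c)
  have hCE : Cp * E = v k := by
    ext a c
    simp [hE, hCp]
  rw [← hAE, ← hCE, Matrix.mul_assoc,
    nonsing_inv_mul_cancel_left _ E ((isUnit_iff_isUnit_det _).mp hunit)]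

/-- if S₁ is Hermitian positive definite and S₂ is Hermitian positive
semidefinite, then for each i the matrix S₂ − z_i S₁ is invertible and
C₊ (S₂ − z_i S₁)⁻¹ C₊* u_i = v_i. -/
theorem stmt11 (p q M : ℕ) (z : Fin M → ℂ) (hz : Function.Injective z)
    (him : ∀ i, 0 < (z i).im)
    (u v : Fin M → Matrix (Fin p) (Fin q) ℂ)
    (S₁ S₂ : Matrix (Fin M × Fin q) (Fin M × Fin q) ℂ)
    (hS₁ : S₁ = Matrix.of fun ia jb =>
      (((u ia.1)ᴴ * v jb.1 - (v ia.1)ᴴ * u jb.1) ia.2 jb.2) /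
        (z jb.1 - (starRingEnd ℂ) (z ia.1)))
    (hS₂ : S₂ = Matrix.of fun ia jb =>
      ((z jb.1 • ((u ia.1)ᴴ * v jb.1) - (starRingEnd ℂ) (z ia.1) • ((v ia.1)ᴴ * u jb.1))
          ia.2 jb.2) /
        (z jb.1 - (starRingEnd ℂ) (z ia.1)))
    (Cp : Matrix (Fin p) (Fin M × Fin q) ℂ)
    (hCp : Cp = Matrix.of fun a jb => v jb.1 a jb.2)
    (hpd : S₁.PosDef) (hpsd : S₂.PosSemidef) :
    ∀ i, IsUnit (S₂ - z i • S₁) ∧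
      Cp * (S₂ - z i • S₁)⁻¹ * (Cpᴴ * u i) = v i :=
  stmt11_general p q M z him u v S₁ S₂ hS₁ hS₂ Cp hCp hpd hpsd
end
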